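/- arXiv:2211.13521 — 2 statements merged into one kernel-verified Lean document; each statement's English description precedes it below -/
import Mathlib

section
/- For every integer d ≥ 1 and reals m > 0, r₀ > 0, t > 0, and every x ∈ ℝ^d with ‖x‖ < r₀λ(t), the function ρ(x,t) = λ(t)^{−d} (1 − (‖x‖/(r₀λ(t)))²)^{1/m} satisfies the porous medium equation ∂ρ/∂t(x,t) = Δ_x(ρ^{m+1}/(m+1))(x,t), where Δ_x denotes the spatial Laplacian (the sum of the second partial derivatives with respect to the components of x). -/
open MeasureTheory

/-- The spatial Laplacian: the sum of the second partial derivatives with respect to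
the components of `x`. -/
noncomputable def spatialLaplacian {d : ℕ} (f : EuclideanSpace ℝ (Fin d) → ℝ)
    (x : EuclideanSpace ℝ (Fin d)) : ℝ :=
  ∑ i : Fin d, fderiv ℝ (fun y => fderiv ℝ f y (EuclideanSpace.single i 1)) x
    (EuclideanSpace.single i 1)

/-- `t₀ = r₀² m / (2(2+dm))`. -/
noncomputable def barenblattT0 (d : ℕ) (m r₀ : ℝ) : ℝ :=
  r₀ ^ 2 * m / (2 * (2 + d * m))

/-- `λ(t) = (t/t₀)^{1/(2+dm)}`. -/
noncomputable def barenblattLambda (d : ℕ) (m r₀ t : ℝ) : ℝ :=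
  (t / barenblattT0 d m r₀) ^ ((1 : ℝ) / (2 + d * m))

/-- The Barenblatt similarity profile `ρ(x,t) = λ(t)^{-d} (1 - (‖x‖/(r₀λ(t)))²)^{1/m}`. -/
noncomputable def barenblatt (d : ℕ) (m r₀ : ℝ) (x : EuclideanSpace ℝ (Fin d)) (t : ℝ) : ℝ :=
  barenblattLambda d m r₀ t ^ (-(d : ℝ)) *
    (1 - (‖x‖ / (r₀ * barenblattLambda d m r₀ t)) ^ 2) ^ ((1 : ℝ) / m)

/-!
Both sides are computed in closed form. Near `x` the pressure `ρ^{m+1}/(m+1)` is the radial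
function `C (1 - ‖y‖²/R²)^{1+1/m}` with `R = r₀λ`, and `Δ φ(‖y‖²) = 2d φ' + 4‖y‖² φ''`; in time,
`ρ` depends on `t` only through `λ`, and `λ' = λ/((2+dm)t)`. With `ξ = (‖x‖/(r₀λ))²`, both sides
are multiples of `-d (1-ξ)^{1/m} + (2/m) ξ (1-ξ)^{1/m-1}`, and the two multiples agree because
`λ^{2+dm} = t/t₀`, which is what the choice of `t₀` is for.
-/

open Filter Topology

theorem Filter.EventuallyEq.spatialLaplacian_eq {d : ℕ} {f g : EuclideanSpace ℝ (Fin d) → ℝ}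
    {x : EuclideanSpace ℝ (Fin d)} (h : f =ᶠ[𝓝 x] g) :
    spatialLaplacian f x = spatialLaplacian g x := by
  refine Finset.sum_congr rfl fun i _ => ?_
  have hpartial : (fun y => fderiv ℝ f y (EuclideanSpace.single i 1))
      =ᶠ[𝓝 x] fun y => fderiv ℝ g y (EuclideanSpace.single i 1) :=
    (h.fderiv (𝕜 := ℝ)).mono fun y hy => by simp only [hy]
  rw [hpartial.fderiv_eq]

theorem spatialLaplacian_comp_norm_sq {d : ℕ} {φ φ' : ℝ → ℝ} {φ'' : ℝ}
    {x : EuclideanSpace ℝ (Fin d)} (hφ : ∀ᶠ s in 𝓝 (‖x‖ ^ 2), HasDerivAt φ (φ' s) s)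
    (hφ' : HasDerivAt φ' φ'' (‖x‖ ^ 2)) :
    spatialLaplacian (fun y => φ (‖y‖ ^ 2)) x = 2 * d * φ' (‖x‖ ^ 2) + 4 * ‖x‖ ^ 2 * φ'' := by
  have hnear : ∀ᶠ y in 𝓝 x, HasDerivAt φ (φ' (‖y‖ ^ 2)) (‖y‖ ^ 2) :=
    ((continuous_norm.pow 2).tendsto x).eventually hφ
  have hpartial : ∀ i : Fin d,
      (fun y => fderiv ℝ (fun y => φ (‖y‖ ^ 2)) y (EuclideanSpace.single i 1))
        =ᶠ[𝓝 x] fun y => φ' (‖y‖ ^ 2) * (2 * y i) := fun i => by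
    filter_upwards [hnear] with y hy
    have hfy : HasFDerivAt (fun y => φ (‖y‖ ^ 2)) _ y :=
      hy.comp_hasFDerivAt y (hasStrictFDerivAt_norm_sq y).hasFDerivAt
    simp [hfy.fderiv, EuclideanSpace.inner_single_right]
  have hsecond : ∀ i : Fin d,
      fderiv ℝ (fun y => φ' (‖y‖ ^ 2) * (2 * y i)) x (EuclideanSpace.single i 1)
        = 2 * φ' (‖x‖ ^ 2) + 4 * φ'' * x i ^ 2 := fun i => by
    have hφ'x := hφ'.comp_hasFDerivAt x (hasStrictFDerivAt_norm_sq x).hasFDerivAt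
    have hgx : HasFDerivAt (fun y => φ' (‖y‖ ^ 2) * (2 * y i)) _ x :=
      hφ'x.mul ((PiLp.hasFDerivAt_apply 2 x i).const_mul (2 : ℝ))
    simp only [hgx.fderiv, Function.comp_apply, add_apply, smul_apply, PiLp.proj_apply,
      PiLp.single_eq_same, smul_eq_mul, mul_one, coe_innerSL_apply,
      EuclideanSpace.inner_single_right, Real.ringHom_apply, one_mul, nsmul_eq_mul,
      Nat.cast_ofNat]
    ring
  unfold spatialLaplacian
  rw [Finset.sum_congr rfl fun i _ => by rw [(hpartial i).fderiv_eq, hsecond i],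
    Finset.sum_add_distrib]
  simp only [Finset.sum_const, Finset.card_univ, Fintype.card_fin, nsmul_eq_mul,
    ← Finset.mul_sum, ← EuclideanSpace.real_norm_sq_eq]
  ring

theorem hasDerivAt_one_sub_div_rpow {a q s : ℝ} (hs : 0 < 1 - s / a) :
    HasDerivAt (fun s => (1 - s / a) ^ q) (-(q / a) * (1 - s / a) ^ (q - 1)) s := by
  have hlin : HasDerivAt (fun s => 1 - s / a) (-(1 / a)) s :=
    ((hasDerivAt_id s).div_const a).const_sub 1
  convert hlin.rpow_const (p := q) (Or.inl hs.ne') using 1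
  ring

theorem spatialLaplacian_mul_one_sub_rpow {d : ℕ} (C R q : ℝ) {x : EuclideanSpace ℝ (Fin d)}
    (hx : ‖x‖ < R) :
    spatialLaplacian (fun y => C * (1 - (‖y‖ / R) ^ 2) ^ q) x
      = 2 * C * q / R ^ 2 * (-d * (1 - (‖x‖ / R) ^ 2) ^ (q - 1)
          + 2 * (q - 1) * (‖x‖ / R) ^ 2 * (1 - (‖x‖ / R) ^ 2) ^ (q - 2)) := by
  have hR : 0 < R := (norm_nonneg x).trans_lt hx
  have hx2 : ‖x‖ ^ 2 < R ^ 2 := pow_lt_pow_left₀ hx (norm_nonneg x) two_ne_zero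
  have hpos : ∀ s < R ^ 2, 0 < 1 - s / R ^ 2 := fun s hs => by
    rw [sub_pos, div_lt_one (by positivity)]; exact hs
  simp only [div_pow]
  have hφ : ∀ᶠ s in 𝓝 (‖x‖ ^ 2), HasDerivAt (fun s => C * (1 - s / R ^ 2) ^ q)
      (C * (-(q / R ^ 2) * (1 - s / R ^ 2) ^ (q - 1))) s := by
    filter_upwards [Iio_mem_nhds hx2] with s hs
    exact (hasDerivAt_one_sub_div_rpow (hpos s hs)).const_mul C
  have hφ' := ((hasDerivAt_one_sub_div_rpow (q := q - 1) (hpos _ hx2)).const_mul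
    (C * -(q / R ^ 2)))
  rw [spatialLaplacian_comp_norm_sq hφ (by simpa only [mul_assoc] using hφ'),
    show q - 1 - 1 = q - 2 by ring]
  field_simp
  ring

theorem hasDerivAt_rpow_neg_mul_one_sub_div_sq_rpow {n p r l : ℝ} (hl : 0 < l)
    (hu : 0 < 1 - (r / l) ^ 2) :
    HasDerivAt (fun l => l ^ (-n) * (1 - (r / l) ^ 2) ^ p)
      (l ^ (-n) / l * (-n * (1 - (r / l) ^ 2) ^ p
        + 2 * p * (r / l) ^ 2 * (1 - (r / l) ^ 2) ^ (p - 1))) l := by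
  have hquot : HasDerivAt (fun l => r / l) (-(r / l) / l) l := by
    refine ((hasDerivAt_const l r).div (hasDerivAt_id l) hl.ne').congr_deriv ?_
    simp only [id, mul_one, zero_mul, zero_sub]
    field_simp
  have hprofile := (Real.hasDerivAt_rpow_const (p := -n) (Or.inl hl.ne')).mul
    (((hquot.pow 2).const_sub 1).rpow_const (p := p) (Or.inl hu.ne'))
  refine hprofile.congr_deriv ?_
  rw [Real.rpow_sub_one hl.ne']
  simp only [Pi.pow_apply]
  push_cast
  ring

section Barenblatt

variable {d : ℕ} {m r₀ t : ℝ}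

theorem barenblattT0_pos (hm : 0 < m) (hr₀ : 0 < r₀) : 0 < barenblattT0 d m r₀ := by
  unfold barenblattT0; positivity

theorem barenblattLambda_pos (hm : 0 < m) (hr₀ : 0 < r₀) (ht : 0 < t) :
    0 < barenblattLambda d m r₀ t :=
  Real.rpow_pos_of_pos (div_pos ht (barenblattT0_pos hm hr₀)) _

theorem barenblattLambda_rpow (hm : 0 < m) (hr₀ : 0 < r₀) (ht : 0 < t) :
    barenblattLambda d m r₀ t ^ (2 + d * m) = t / barenblattT0 d m r₀ := by
  rw [barenblattLambda, ← Real.rpow_mul (div_pos ht (barenblattT0_pos hm hr₀)).le,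
    one_div_mul_cancel (by positivity), Real.rpow_one]

theorem hasDerivAt_barenblattLambda (hm : 0 < m) (hr₀ : 0 < r₀) (ht : 0 < t) :
    HasDerivAt (barenblattLambda d m r₀)
      (barenblattLambda d m r₀ t / ((2 + d * m) * t)) t := by
  have ht₀ := barenblattT0_pos (d := d) hm hr₀
  have hquot : HasDerivAt (fun s => s / barenblattT0 d m r₀) (1 / barenblattT0 d m r₀) t := by
    simpa using (hasDerivAt_id t).div_const (barenblattT0 d m r₀)
  refine (hquot.rpow_const (p := 1 / (2 + d * m)) (Or.inl (div_pos ht ht₀).ne')).congr_deriv ?_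
  rw [Real.rpow_sub_one (div_pos ht ht₀).ne', barenblattLambda]
  field_simp

theorem deriv_barenblatt (hm : 0 < m) (hr₀ : 0 < r₀) (ht : 0 < t) {x : EuclideanSpace ℝ (Fin d)}
    (hx : ‖x‖ < r₀ * barenblattLambda d m r₀ t) :
    deriv (fun s => barenblatt d m r₀ x s) t
      = barenblattLambda d m r₀ t ^ (-(d : ℝ)) / ((2 + d * m) * t)
        * (-d * (1 - (‖x‖ / (r₀ * barenblattLambda d m r₀ t)) ^ 2) ^ (1 / m)
          + 2 * (1 / m) * (‖x‖ / (r₀ * barenblattLambda d m r₀ t)) ^ 2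
            * (1 - (‖x‖ / (r₀ * barenblattLambda d m r₀ t)) ^ 2) ^ (1 / m - 1)) := by
  have hL := barenblattLambda_pos (d := d) hm hr₀ ht
  have hu : 0 < 1 - (‖x‖ / r₀ / barenblattLambda d m r₀ t) ^ 2 := by
    rw [div_div, sub_pos, sq_lt_one_iff₀ (by positivity)]
    exact (div_lt_one (by positivity)).2 hx
  have hcomp : (fun s => barenblatt d m r₀ x s)
      = (fun l => l ^ (-(d : ℝ)) * (1 - (‖x‖ / r₀ / l) ^ 2) ^ (1 / m))
        ∘ barenblattLambda d m r₀ := by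
    funext s; simp only [barenblatt, Function.comp_apply, div_div]
  rw [hcomp, ((hasDerivAt_rpow_neg_mul_one_sub_div_sq_rpow hL hu).comp t
    (hasDerivAt_barenblattLambda hm hr₀ ht)).deriv, div_div]
  field_simp

theorem spatialLaplacian_barenblatt_rpow (hm : 0 < m) (hr₀ : 0 < r₀) (ht : 0 < t)
    {x : EuclideanSpace ℝ (Fin d)} (hx : ‖x‖ < r₀ * barenblattLambda d m r₀ t) :
    spatialLaplacian (fun y => barenblatt d m r₀ y t ^ (m + 1) / (m + 1)) x
      = 2 * (barenblattLambda d m r₀ t ^ (-(d : ℝ))) ^ (m + 1)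
          / (m * (r₀ * barenblattLambda d m r₀ t) ^ 2)
        * (-d * (1 - (‖x‖ / (r₀ * barenblattLambda d m r₀ t)) ^ 2) ^ (1 / m)
          + 2 * (1 / m) * (‖x‖ / (r₀ * barenblattLambda d m r₀ t)) ^ 2
            * (1 - (‖x‖ / (r₀ * barenblattLambda d m r₀ t)) ^ 2) ^ (1 / m - 1)) := by
  set L := barenblattLambda d m r₀ t
  have hL : 0 < L := barenblattLambda_pos hm hr₀ ht
  have hpressure : (fun y => barenblatt d m r₀ y t ^ (m + 1) / (m + 1))
      =ᶠ[𝓝 x] fun y => (L ^ (-(d : ℝ))) ^ (m + 1) / (m + 1)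
        * (1 - (‖y‖ / (r₀ * L)) ^ 2) ^ ((m + 1) / m) := by
    filter_upwards [Metric.isOpen_ball.mem_nhds (mem_ball_zero_iff.2 hx)] with y hy
    have hu : 0 < 1 - (‖y‖ / (r₀ * L)) ^ 2 := by
      rw [sub_pos, sq_lt_one_iff₀ (by positivity)]
      exact (div_lt_one (by positivity)).2 (mem_ball_zero_iff.1 hy)
    rw [barenblatt, Real.mul_rpow (by positivity) (by positivity), ← Real.rpow_mul hu.le,
      one_div_mul_eq_div]
    ring
  rw [hpressure.spatialLaplacian_eq, spatialLaplacian_mul_one_sub_rpow _ _ _ hx,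
    show (m + 1) / m - 1 = 1 / m by field_simp; ring,
    show (m + 1) / m - 2 = 1 / m - 1 by field_simp; ring]
  field_simp

end Barenblatt

theorem barenblatt_satisfies_PME_general (d : ℕ) (m r₀ t : ℝ)
    (hm : 0 < m) (hr₀ : 0 < r₀) (ht : 0 < t)
    (x : EuclideanSpace ℝ (Fin d)) (hx : ‖x‖ < r₀ * barenblattLambda d m r₀ t) :
    deriv (fun s => barenblatt d m r₀ x s) t
      = spatialLaplacian (fun y => barenblatt d m r₀ y t ^ (m + 1) / (m + 1)) x := by
  rw [deriv_barenblatt hm hr₀ ht hx, spatialLaplacian_barenblatt_rpow hm hr₀ ht hx]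
  congr 1
  have hL := barenblattLambda_pos (d := d) hm hr₀ ht
  have hscale := barenblattLambda_rpow (d := d) hm hr₀ ht
  rw [Real.rpow_add hL, Real.rpow_two, barenblattT0] at hscale
  rw [← Real.rpow_mul hL.le, show -(d : ℝ) * (m + 1) = -d + -(d * m) by ring,
    Real.rpow_add hL, Real.rpow_neg hL.le (d * m)]
  field_simp at hscale ⊢
  linear_combination hscale

/-- For every integer `d ≥ 1`, reals `m > 0`, `r₀ > 0`, `t > 0` and every `x ∈ ℝ^d` with
`‖x‖ < r₀ λ(t)`, the Barenblatt similarity solution satisfies the porous medium equation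
`∂ρ/∂t(x,t) = Δ_x(ρ^{m+1}/(m+1))(x,t)`. -/
theorem barenblatt_satisfies_PME (d : ℕ) (hd : 1 ≤ d) (m r₀ t : ℝ)
    (hm : 0 < m) (hr₀ : 0 < r₀) (ht : 0 < t)
    (x : EuclideanSpace ℝ (Fin d)) (hx : ‖x‖ < r₀ * barenblattLambda d m r₀ t) :
    deriv (fun s => barenblatt d m r₀ x s) t
      = spatialLaplacian (fun y => barenblatt d m r₀ y t ^ (m + 1) / (m + 1)) x :=
  barenblatt_satisfies_PME_general d m r₀ t hm hr₀ ht x hx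
end

section
/- Reynolds transport theorem: let d ≥ 1, let Ω ⊂ ℝ^d be a bounded open set, let v : ℝ^d × ℝ → ℝ^d be continuously differentiable, and let Φ : ℝ^d × ℝ → ℝ^d be continuously differentiable (jointly in (ξ,t)) with Φ(ξ, 0) = ξ, such that for each t the map ξ ↦ Φ(ξ, t) is injective with invertible spatial differential at every point, and ∂Φ/∂t(ξ, t) = v(Φ(ξ, t), t) for all (ξ, t). Let f : ℝ^d × ℝ → ℝ be continuously differentiable. Then for every t the function s ↦ ∫_{Φ(Ω, s)} f(x, s) dx is differentiable at t with derivative ∫_{Φ(Ω, t)} [ ∂f/∂t(x, t) + div_x( f(·, t) v(·, t) )(x) ] dx, where Φ(Ω, s) = { Φ(ξ, s) : ξ ∈ Ω } and div_x(f v) = ∇_x f · v + f div_x v. -/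
/-!
Pull the integral back to the fixed domain `Ω` by the change of variables `x = Φ(ξ, s)`. Its
Jacobian `J = det D_ξΦ` never vanishes and equals `1` at `s = 0`, so it is positive and no
absolute value appears. The pulled-back integrand `J(ξ, s) f(Φ(ξ, s), s)` is differentiated under
the integral sign: Jacobi's formula for the determinant together with the variational equation
`∂ₛ D_ξΦ = D_x v(Φ, s) ∘ D_ξΦ` gives `∂ₛ J = (div v)(Φ, s) J` (Liouville's formula), and the chain
rule gives the material derivative `∂ₜf + ∇ₓf · v` of `f(Φ(ξ, s), s)`. Pushing forward again
yields the claim.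
-/

open MeasureTheory Set

namespace Matrix

theorem det_eq_sum_sign_mul_prod {R n : Type*} [CommRing R] [Fintype n] [DecidableEq n]
    (M : Matrix n n R) :
    M.det = ∑ σ : Equiv.Perm n, (Equiv.Perm.sign σ : R) * ∏ i, M i (σ i) := by
  rw [← det_transpose, det_apply']
  rfl

theorem sum_det_updateRow_mul {R n : Type*} [CommRing R] [Fintype n] [DecidableEq n]
    (C M : Matrix n n R) :
    ∑ i, (M.updateRow i ((C * M) i)).det = C.trace * M.det := by
  simp_rw [trace, diag_apply, Finset.sum_mul]
  refine Finset.sum_congr rfl fun i _ => ?_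
  have hrow : (C * M) i = ∑ k, C i k • M k := by
    ext j
    simp [mul_apply]
  rw [hrow, det_updateRow_sum, smul_eq_mul]

theorem hasDerivAt_det {𝕜 n : Type*} [NontriviallyNormedField 𝕜] [Fintype n] [DecidableEq n]
    {M : 𝕜 → Matrix n n 𝕜} {N : Matrix n n 𝕜} {t : 𝕜}
    (h : ∀ i j, HasDerivAt (fun s => M s i j) (N i j) t) :
    HasDerivAt (fun s => (M s).det) (∑ i, ((M t).updateRow i (N i)).det) t := by
  have hterm : ∀ (σ : Equiv.Perm n) (i : n),
      (∏ j ∈ Finset.univ.erase i, M t j (σ j)) * N i (σ i)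
        = ∏ j, (M t).updateRow i (N i) j (σ j) := by
    intro σ i
    rw [← Finset.mul_prod_erase _ _ (Finset.mem_univ i), updateRow_self, mul_comm]
    congr 1
    exact Finset.prod_congr rfl fun j hj => by rw [updateRow_ne (Finset.ne_of_mem_erase hj)]
  have hsum : ∑ i, ((M t).updateRow i (N i)).det
      = ∑ σ : Equiv.Perm n, (Equiv.Perm.sign σ : 𝕜) *
          ∑ i, (∏ j ∈ Finset.univ.erase i, M t j (σ j)) • N i (σ i) := by
    simp_rw [smul_eq_mul, hterm, Finset.mul_sum, det_eq_sum_sign_mul_prod]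
    exact Finset.sum_comm
  rw [hsum]
  simp only [det_eq_sum_sign_mul_prod]
  exact HasDerivAt.fun_sum fun σ _ =>
    (HasDerivAt.fun_finsetProd fun i _ => h i (σ i)).const_mul _

end Matrix

theorem ContinuousLinearMap.hasDerivAt_det {𝕜 E : Type*} [NontriviallyNormedField 𝕜]
    [CompleteSpace 𝕜] [NormedAddCommGroup E] [NormedSpace 𝕜 E] [FiniteDimensional 𝕜 E]
    {A : 𝕜 → E →L[𝕜] E} {L : E →L[𝕜] E} {t : 𝕜} (hA : HasDerivAt A (L ∘L A t) t) :
    HasDerivAt (fun s => (A s).det) (LinearMap.trace 𝕜 E L * (A t).det) t := by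
  classical
  let b := Module.finBasis 𝕜 E
  let M : 𝕜 → Matrix (Fin (Module.finrank 𝕜 E)) (Fin (Module.finrank 𝕜 E)) 𝕜 :=
    fun s => LinearMap.toMatrix b b (A s)
  have hM : ∀ i j, HasDerivAt (fun s => M s i j) (LinearMap.toMatrix b b (L ∘L A t) i j) t :=
    fun i j => by
      simp only [M, LinearMap.toMatrix_apply]
      exact ((b.coord i).toContinuousLinearMap ∘L apply 𝕜 E (b j)).hasFDerivAt.comp_hasDerivAt t hA
  have hLA : LinearMap.toMatrix b b (L ∘L A t) = LinearMap.toMatrix b b L * M t :=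
    LinearMap.toMatrix_comp b b b (L : E →ₗ[𝕜] E) (A t)
  have hdet := Matrix.hasDerivAt_det hM
  rw [hLA, Matrix.sum_det_updateRow_mul] at hdet
  simpa [M, LinearMap.trace_eq_matrix_trace 𝕜 b, det] using hdet

theorem EuclideanSpace.sum_fderiv_apply_single_eq_trace {ι : Type*} [Fintype ι] [DecidableEq ι]
    {g : EuclideanSpace ℝ ι → EuclideanSpace ℝ ι} {x : EuclideanSpace ℝ ι}
    (hg : DifferentiableAt ℝ g x) :
    ∑ i, fderiv ℝ (fun y => g y i) x (EuclideanSpace.single i 1)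
      = LinearMap.trace ℝ _ (fderiv ℝ g x : EuclideanSpace ℝ ι →ₗ[ℝ] EuclideanSpace ℝ ι) := by
  rw [LinearMap.trace_eq_matrix_trace ℝ (EuclideanSpace.basisFun ι ℝ).toBasis]
  refine Finset.sum_congr rfl fun i _ => ?_
  have hcoord : HasFDerivAt (fun y => g y i) (EuclideanSpace.proj (𝕜 := ℝ) i ∘L fderiv ℝ g x) x :=
    (EuclideanSpace.proj (𝕜 := ℝ) i).hasFDerivAt.comp x hg.hasFDerivAt
  simp [hcoord.fderiv, LinearMap.toMatrix_apply]

section PartialFDeriv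

variable {𝕜 : Type*} [NontriviallyNormedField 𝕜]
  {E : Type*} [NormedAddCommGroup E] [NormedSpace 𝕜 E]
  {F : Type*} [NormedAddCommGroup F] [NormedSpace 𝕜 F]
  {G : Type*} [NormedAddCommGroup G] [NormedSpace 𝕜 G]

variable (𝕜) in
noncomputable def partialFDerivFst (f : E × F → G) (p : E × F) : E →L[𝕜] G :=
  fderiv 𝕜 f p ∘L ContinuousLinearMap.inl 𝕜 E F

theorem DifferentiableAt.hasFDerivAt_partialFDerivFst {f : E × F → G} {x : E} {y : F}
    (hf : DifferentiableAt 𝕜 f (x, y)) :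
    HasFDerivAt (fun x' => f (x', y)) (partialFDerivFst 𝕜 f (x, y)) x :=
  hf.hasFDerivAt.comp x (hasFDerivAt_prodMk_left x y)

theorem ContDiff.continuous_partialFDerivFst {f : E × F → G} (hf : ContDiff 𝕜 1 f) :
    Continuous (partialFDerivFst 𝕜 f) :=
  (hf.continuous_fderiv one_ne_zero).clm_comp continuous_const

theorem DifferentiableAt.fderiv_apply_prodMk_one {f : E × 𝕜 → G} {x : E} {t : 𝕜}
    (hf : DifferentiableAt 𝕜 f (x, t)) (u : E) :
    fderiv 𝕜 f (x, t) (u, 1) = partialFDerivFst 𝕜 f (x, t) u + deriv (fun s => f (x, s)) t := by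
  have hcurve : HasDerivAt (fun s => (x, s)) ((0 : E), (1 : 𝕜)) t :=
    (hasDerivAt_const t x).prodMk (hasDerivAt_id t)
  have hderiv : deriv (fun s => f (x, s)) t = fderiv 𝕜 f (x, t) (0, 1) :=
    (hf.hasFDerivAt.comp_hasDerivAt t hcurve).deriv
  rw [hderiv, partialFDerivFst, ContinuousLinearMap.comp_apply, ContinuousLinearMap.inl_apply,
    ← map_add, Prod.mk_add_mk, add_zero, zero_add]

end PartialFDeriv

theorem hasFDerivAt_intervalIntegral_of_contDiff {E G : Type*} [NormedAddCommGroup E]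
    [NormedSpace ℝ E] [ProperSpace E] [NormedAddCommGroup G] [NormedSpace ℝ G]
    {f : E × ℝ → G} (hf : ContDiff ℝ 1 f) (a b : ℝ) (x : E) :
    HasFDerivAt (fun y => ∫ τ in a..b, f (y, τ)) (∫ τ in a..b, partialFDerivFst ℝ f (x, τ)) x := by
  have hf' := hf.continuous_partialFDerivFst
  obtain ⟨C, hC⟩ := ((isCompact_closedBall x 1).prod isCompact_uIcc).exists_bound_of_continuousOn
    hf'.continuousOn
  refine intervalIntegral.hasFDerivAt_integral_of_dominated_of_fderiv_le
    (F := fun y τ => f (y, τ)) (F' := fun y τ => partialFDerivFst ℝ f (y, τ)) (bound := fun _ => C)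
    (Metric.ball_mem_nhds x zero_lt_one) ?_ ?_ ?_ ?_ intervalIntegrable_const ?_
  · exact .of_forall fun y => (hf.continuous.comp (.prodMk_right y)).aestronglyMeasurable
  · exact (hf.continuous.comp (.prodMk_right x)).intervalIntegrable a b
  · exact (hf'.comp (.prodMk_right x)).aestronglyMeasurable
  · refine .of_forall fun τ hτ y hy => hC (y, τ) ⟨?_, uIoc_subset_uIcc hτ⟩
    exact Metric.ball_subset_closedBall hy
  · exact .of_forall fun τ _ y _ =>
      (hf.differentiable one_ne_zero (y, τ)).hasFDerivAt_partialFDerivFst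

theorem hasDerivAt_setIntegral_of_continuous {X G : Type*} [MetricSpace X] [ProperSpace X]
    [MeasurableSpace X] [OpensMeasurableSpace X] {μ : Measure X} [IsFiniteMeasureOnCompacts μ]
    [NormedAddCommGroup G] [NormedSpace ℝ G]
    {s : Set X} (hs : Bornology.IsBounded s) {F F' : X × ℝ → G} (hF : Continuous F)
    (hF' : Continuous F') (hderiv : ∀ x t, HasDerivAt (fun t => F (x, t)) (F' (x, t)) t)
    (t : ℝ) :
    HasDerivAt (fun t => ∫ x in s, F (x, t) ∂μ) (∫ x in s, F' (x, t) ∂μ) t := by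
  have hK := hs.isCompact_closure
  obtain ⟨C, hC⟩ := (hK.prod (isCompact_closedBall t 1)).exists_bound_of_continuousOn
    hF'.continuousOn
  have : IsFiniteMeasure (μ.restrict s) :=
    ⟨by simpa using (measure_mono subset_closure).trans_lt hK.measure_lt_top⟩
  refine (hasDerivAt_integral_of_dominated_loc_of_deriv_le (μ := μ.restrict s)
    (F := fun τ x => F (x, τ)) (F' := fun τ x => F' (x, τ)) (bound := fun _ => C)
    (Metric.ball_mem_nhds t zero_lt_one) ?_ ?_ ?_ ?_ (integrable_const C) ?_).2
  · exact .of_forall fun τ => (hF.comp (.prodMk_left τ)).aestronglyMeasurable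
  · exact (((hF.comp (.prodMk_left t)).continuousOn.integrableOn_compact hK).mono_set
      subset_closure)
  · exact (hF'.comp (.prodMk_left t)).aestronglyMeasurable
  · refine ae_restrict_of_ae_restrict_of_subset subset_closure ?_
    filter_upwards [ae_restrict_mem isClosed_closure.measurableSet] with x hx τ hτ
    exact hC (x, τ) ⟨hx, Metric.ball_subset_closedBall hτ⟩
  · exact .of_forall fun x τ _ => hderiv x τ

theorem pos_of_continuous_of_forall_ne_zero {g : ℝ → ℝ} (hg : Continuous g)
    (hne : ∀ s, g s ≠ 0) {a : ℝ} (ha : 0 < g a) (b : ℝ) : 0 < g b := by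
  by_contra! hb
  obtain ⟨c, hc⟩ := intermediate_value_univ b a hg ⟨hb, ha.le⟩
  exact hne c hc

section Flow

variable {E : Type*} [NormedAddCommGroup E] [NormedSpace ℝ E] {Φ v : E × ℝ → E}

/-- As `Φ` is only `C¹`, its mixed partial derivatives cannot be swapped; instead the integral
form `Φ(y, s) = Φ(y, 0) + ∫₀ˢ v(Φ(y, τ), τ) dτ` of the flow equation is differentiated in `y`. -/
theorem hasDerivAt_partialFDerivFst_of_hasDerivAt_flow [ProperSpace E]
    (hΦ : ContDiff ℝ 1 Φ) (hv : ContDiff ℝ 1 v)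
    (hflow : ∀ x t, HasDerivAt (fun s => Φ (x, s)) (v (Φ (x, t), t)) t) (x : E) (t : ℝ) :
    HasDerivAt (fun s => partialFDerivFst ℝ Φ (x, s))
      (partialFDerivFst ℝ v (Φ (x, t), t) ∘L partialFDerivFst ℝ Φ (x, t)) t := by
  set w : E × ℝ → E := fun p => v (Φ p, p.2)
  have hw : ContDiff ℝ 1 w := hv.comp (hΦ.prodMk contDiff_snd)
  have hΦd := hΦ.differentiable one_ne_zero
  have hvd := hv.differentiable one_ne_zero
  have hw' : partialFDerivFst ℝ w (x, t)
      = partialFDerivFst ℝ v (Φ (x, t), t) ∘L partialFDerivFst ℝ Φ (x, t) :=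
    (hw.differentiable one_ne_zero (x, t)).hasFDerivAt_partialFDerivFst.unique <|
      (hvd _).hasFDerivAt_partialFDerivFst.comp x (hΦd _).hasFDerivAt_partialFDerivFst
  have hFTC : ∀ y s, Φ (y, s) = Φ (y, 0) + ∫ τ in (0 : ℝ)..s, w (y, τ) := fun y s => by
    rw [intervalIntegral.integral_eq_sub_of_hasDerivAt (fun τ _ => hflow y τ)
      ((hw.continuous.comp (.prodMk_right y)).intervalIntegrable 0 s), add_sub_cancel]
  have hintegral : ∀ s, partialFDerivFst ℝ Φ (x, s)
      = partialFDerivFst ℝ Φ (x, 0) + ∫ τ in (0 : ℝ)..s, partialFDerivFst ℝ w (x, τ) := by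
    intro s
    refine (hΦd _).hasFDerivAt_partialFDerivFst.unique ?_
    simp_rw [hFTC _ s]
    exact (hΦd _).hasFDerivAt_partialFDerivFst.add
      (hasFDerivAt_intervalIntegral_of_contDiff hw 0 s x)
  have hcont : Continuous fun τ => partialFDerivFst ℝ w (x, τ) :=
    hw.continuous_partialFDerivFst.comp (.prodMk_right x)
  rw [← hw', funext hintegral]
  exact (hcont.integral_hasStrictDerivAt 0 t).hasDerivAt.const_add _

theorem det_partialFDerivFst_pos (hΦ : ContDiff ℝ 1 Φ) (hΦ0 : ∀ x, Φ (x, 0) = x)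
    (hinv : ∀ x t, ∃ L : E ≃L[ℝ] E, (L : E →L[ℝ] E) = fderiv ℝ (fun y => Φ (y, t)) x)
    (x : E) (t : ℝ) : 0 < (partialFDerivFst ℝ Φ (x, t)).det := by
  have hΦd := hΦ.differentiable one_ne_zero
  have hcont : Continuous fun s => (partialFDerivFst ℝ Φ (x, s)).det :=
    ContinuousLinearMap.continuous_det.comp (hΦ.continuous_partialFDerivFst.comp (.prodMk_right x))
  have hne : ∀ s, (partialFDerivFst ℝ Φ (x, s)).det ≠ 0 := fun s => by
    obtain ⟨L, hL⟩ := hinv x s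
    rw [← (hΦd _).hasFDerivAt_partialFDerivFst.fderiv, ← hL]
    exact L.toLinearEquiv.isUnit_det'.ne_zero
  have hid : partialFDerivFst ℝ Φ (x, 0) = ContinuousLinearMap.id ℝ E :=
    (hΦd _).hasFDerivAt_partialFDerivFst.unique (by simp_rw [hΦ0]; exact hasFDerivAt_id x)
  refine pos_of_continuous_of_forall_ne_zero hcont hne (a := 0) ?_ t
  simp [hid, ContinuousLinearMap.det]

variable [FiniteDimensional ℝ E]

theorem hasDerivAt_det_partialFDerivFst_of_hasDerivAt_flow
    (hΦ : ContDiff ℝ 1 Φ) (hv : ContDiff ℝ 1 v)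
    (hflow : ∀ x t, HasDerivAt (fun s => Φ (x, s)) (v (Φ (x, t), t)) t) (x : E) (t : ℝ) :
    HasDerivAt (fun s => (partialFDerivFst ℝ Φ (x, s)).det)
      (LinearMap.trace ℝ E (partialFDerivFst ℝ v (Φ (x, t), t)) *
        (partialFDerivFst ℝ Φ (x, t)).det) t :=
  ContinuousLinearMap.hasDerivAt_det <|
    hasDerivAt_partialFDerivFst_of_hasDerivAt_flow hΦ hv hflow x t

variable [MeasurableSpace E] [BorelSpace E]

theorem integral_image_flow {μ : Measure E} [μ.IsAddHaarMeasure] (hΦ : ContDiff ℝ 1 Φ)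
    (hΦ0 : ∀ x, Φ (x, 0) = x) (hinj : ∀ t, Function.Injective fun x => Φ (x, t))
    (hinv : ∀ x t, ∃ L : E ≃L[ℝ] E, (L : E →L[ℝ] E) = fderiv ℝ (fun y => Φ (y, t)) x)
    {Ω : Set E} (hΩ : MeasurableSet Ω) (t : ℝ) (g : E → ℝ) :
    ∫ x in (fun ξ => Φ (ξ, t)) '' Ω, g x ∂μ
      = ∫ ξ in Ω, (partialFDerivFst ℝ Φ (ξ, t)).det * g (Φ (ξ, t)) ∂μ := by
  rw [integral_image_eq_integral_abs_det_fderiv_smul μ hΩ (fun ξ _ =>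
    ((hΦ.differentiable one_ne_zero) (ξ, t)).hasFDerivAt_partialFDerivFst.hasFDerivWithinAt)
    (hinj t).injOn]
  simp_rw [abs_of_pos (det_partialFDerivFst_pos hΦ hΦ0 hinv _ t), smul_eq_mul]

theorem hasDerivAt_integral_det_mul_comp_flow {μ : Measure E} [IsFiniteMeasureOnCompacts μ]
    (hΦ : ContDiff ℝ 1 Φ) (hv : ContDiff ℝ 1 v)
    (hflow : ∀ x t, HasDerivAt (fun s => Φ (x, s)) (v (Φ (x, t), t)) t)
    {f : E × ℝ → ℝ} (hf : ContDiff ℝ 1 f) {Ω : Set E} (hΩ : Bornology.IsBounded Ω) (t : ℝ) :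
    HasDerivAt (fun s => ∫ ξ in Ω, (partialFDerivFst ℝ Φ (ξ, s)).det * f (Φ (ξ, s), s) ∂μ)
      (∫ ξ in Ω, (partialFDerivFst ℝ Φ (ξ, t)).det *
        (fderiv ℝ f (Φ (ξ, t), t) (v (Φ (ξ, t), t), 1)
          + f (Φ (ξ, t), t) * LinearMap.trace ℝ E (partialFDerivFst ℝ v (Φ (ξ, t), t))) ∂μ) t := by
  have hJ : Continuous fun p => (partialFDerivFst ℝ Φ p).det :=
    ContinuousLinearMap.continuous_det.comp hΦ.continuous_partialFDerivFst
  have htrace : Continuous fun A : E →L[ℝ] E => LinearMap.trace ℝ E A :=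
    (LinearMap.trace ℝ E ∘ₗ ContinuousLinearMap.coeLM ℝ).continuous_of_finiteDimensional
  have hΦt : Continuous fun p : E × ℝ => (Φ p, p.2) := hΦ.continuous.prodMk continuous_snd
  have hfΦ : Continuous fun p : E × ℝ => f (Φ p, p.2) := hf.continuous.comp hΦt
  have hDf : Continuous fun p : E × ℝ => fderiv ℝ f (Φ p, p.2) (v (Φ p, p.2), 1) :=
    ((hf.continuous_fderiv one_ne_zero).comp hΦt).clm_apply
      ((hv.continuous.comp hΦt).prodMk continuous_const)
  have hdiv : Continuous fun p : E × ℝ => LinearMap.trace ℝ E (partialFDerivFst ℝ v (Φ p, p.2)) :=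
    htrace.comp (hv.continuous_partialFDerivFst.comp hΦt)
  refine hasDerivAt_setIntegral_of_continuous hΩ
    (F' := fun p => (partialFDerivFst ℝ Φ p).det * (fderiv ℝ f (Φ p, p.2) (v (Φ p, p.2), 1)
      + f (Φ p, p.2) * LinearMap.trace ℝ E (partialFDerivFst ℝ v (Φ p, p.2))))
    (hJ.mul hfΦ) (hJ.mul (hDf.add (hfΦ.mul hdiv))) (fun ξ s => ?_) t
  have hmaterial : HasDerivAt (fun s => f (Φ (ξ, s), s))
      (fderiv ℝ f (Φ (ξ, s), s) (v (Φ (ξ, s), s), 1)) s :=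
    (hf.differentiable one_ne_zero _).hasFDerivAt.comp_hasDerivAt s
      ((hflow ξ s).prodMk (hasDerivAt_id s))
  refine ((hasDerivAt_det_partialFDerivFst_of_hasDerivAt_flow hΦ hv hflow ξ s).mul
    hmaterial).congr_deriv ?_
  ring

end Flow

theorem reynolds_transport_general (d : ℕ)
    (Ω : Set (EuclideanSpace ℝ (Fin d))) (hΩopen : IsOpen Ω) (hΩbdd : Bornology.IsBounded Ω)
    (v : EuclideanSpace ℝ (Fin d) × ℝ → EuclideanSpace ℝ (Fin d)) (hv : ContDiff ℝ 1 v)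
    (Φ : EuclideanSpace ℝ (Fin d) × ℝ → EuclideanSpace ℝ (Fin d)) (hΦ : ContDiff ℝ 1 Φ)
    (hΦ0 : ∀ ξ, Φ (ξ, 0) = ξ)
    (hΦinj : ∀ t : ℝ, Function.Injective (fun ξ => Φ (ξ, t)))
    (hΦinv : ∀ (ξ : EuclideanSpace ℝ (Fin d)) (t : ℝ),
      ∃ L : EuclideanSpace ℝ (Fin d) ≃L[ℝ] EuclideanSpace ℝ (Fin d),
        (L : EuclideanSpace ℝ (Fin d) →L[ℝ] EuclideanSpace ℝ (Fin d))
          = fderiv ℝ (fun η => Φ (η, t)) ξ)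
    (hflow : ∀ (ξ : EuclideanSpace ℝ (Fin d)) (t : ℝ),
      HasDerivAt (fun s => Φ (ξ, s)) (v (Φ (ξ, t), t)) t)
    (f : EuclideanSpace ℝ (Fin d) × ℝ → ℝ) (hf : ContDiff ℝ 1 f) :
    ∀ t : ℝ,
      HasDerivAt (fun s => ∫ x in (fun ξ => Φ (ξ, s)) '' Ω, f (x, s))
        (∫ x in (fun ξ => Φ (ξ, t)) '' Ω,
          (deriv (fun s => f (x, s)) t
            + (fderiv ℝ (fun y => f (y, t)) x (v (x, t))
              + f (x, t) * ∑ i : Fin d,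
                  fderiv ℝ (fun y => v (y, t) i) x (EuclideanSpace.single i 1)))) t := by
  intro t
  have hvd := hv.differentiable one_ne_zero
  have hfd := hf.differentiable one_ne_zero
  simp only [integral_image_flow hΦ hΦ0 hΦinj hΦinv hΩopen.measurableSet]
  refine (hasDerivAt_integral_det_mul_comp_flow hΦ hv hflow hf hΩbdd t).congr_deriv
    (integral_congr_ae (.of_forall fun ξ => ?_))
  dsimp only
  rw [(hfd _).fderiv_apply_prodMk_one, (hfd _).hasFDerivAt_partialFDerivFst.fderiv,
    EuclideanSpace.sum_fderiv_apply_single_eq_trace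
      (hvd _).hasFDerivAt_partialFDerivFst.differentiableAt,
    (hvd _).hasFDerivAt_partialFDerivFst.fderiv]
  ring

/-- Reynolds transport theorem.  Let `Ω ⊂ ℝ^d` be a bounded open set, `v` a `C¹` velocity
field, and `Φ` a jointly `C¹` flow map with `Φ(ξ,0) = ξ`, `ξ ↦ Φ(ξ,t)` injective with
invertible spatial differential at every point, and `∂Φ/∂t(ξ,t) = v(Φ(ξ,t), t)`.
Then for every `C¹` function `f` and every time `t`, the map
`s ↦ ∫_{Φ(Ω,s)} f(x,s) dx` is differentiable at `t` with derivative
`∫_{Φ(Ω,t)} [∂f/∂t(x,t) + ∇_x f(x,t)·v(x,t) + f(x,t) div_x v(x,t)] dx`. -/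
theorem reynolds_transport (d : ℕ) (hd : 1 ≤ d)
    (Ω : Set (EuclideanSpace ℝ (Fin d))) (hΩopen : IsOpen Ω) (hΩbdd : Bornology.IsBounded Ω)
    (v : EuclideanSpace ℝ (Fin d) × ℝ → EuclideanSpace ℝ (Fin d)) (hv : ContDiff ℝ 1 v)
    (Φ : EuclideanSpace ℝ (Fin d) × ℝ → EuclideanSpace ℝ (Fin d)) (hΦ : ContDiff ℝ 1 Φ)
    (hΦ0 : ∀ ξ, Φ (ξ, 0) = ξ)
    (hΦinj : ∀ t : ℝ, Function.Injective (fun ξ => Φ (ξ, t)))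
    (hΦinv : ∀ (ξ : EuclideanSpace ℝ (Fin d)) (t : ℝ),
      ∃ L : EuclideanSpace ℝ (Fin d) ≃L[ℝ] EuclideanSpace ℝ (Fin d),
        (L : EuclideanSpace ℝ (Fin d) →L[ℝ] EuclideanSpace ℝ (Fin d))
          = fderiv ℝ (fun η => Φ (η, t)) ξ)
    (hflow : ∀ (ξ : EuclideanSpace ℝ (Fin d)) (t : ℝ),
      HasDerivAt (fun s => Φ (ξ, s)) (v (Φ (ξ, t), t)) t)
    (f : EuclideanSpace ℝ (Fin d) × ℝ → ℝ) (hf : ContDiff ℝ 1 f) :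
    ∀ t : ℝ,
      HasDerivAt (fun s => ∫ x in (fun ξ => Φ (ξ, s)) '' Ω, f (x, s))
        (∫ x in (fun ξ => Φ (ξ, t)) '' Ω,
          (deriv (fun s => f (x, s)) t
            + (fderiv ℝ (fun y => f (y, t)) x (v (x, t))
              + f (x, t) * ∑ i : Fin d,
                  fderiv ℝ (fun y => v (y, t) i) x (EuclideanSpace.single i 1)))) t :=
  reynolds_transport_general d Ω hΩopen hΩbdd v hv Φ hΦ hΦ0 hΦinj hΦinv hflow f hf
end
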